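/- Let x_1, …, x_m be unit vectors in ℝ^d with x_i·x_j = 0 for every i ≠ j, and let y_i ∈ {−1,+1} be labels with I_- := {i ∈ [m] : y_i = −1}. Then there exist a width n and a KKT point θ of the margin-maximization problem for bias-less 2-layer ReLU networks of width n such that Pr_{x~Unif(S^{d−1})}[N_θ(x) ≤ 0] ≥ 1/2 − 1/2^{|I_-|}. -/

import Mathlib

open MeasureTheory

/-- ReLU. -/
noncomputable def relu (z : ℝ) : ℝ := max z 0

/-- Bias-less 2-layer ReLU network on ℝ^d. -/
noncomputable def netNB {d n : ℕ} (v : Fin n → ℝ) (w : Fin n → EuclideanSpace ℝ (Fin d))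
    (x : EuclideanSpace ℝ (Fin d)) : ℝ :=
  ∑ j, v j * relu (inner ℝ (w j) x : ℝ)

/-- KKT point of the margin-maximization problem for bias-less networks. -/
def IsKKTNB {d m n : ℕ} (x : Fin m → EuclideanSpace ℝ (Fin d)) (y : Fin m → ℝ)
    (v : Fin n → ℝ) (w : Fin n → EuclideanSpace ℝ (Fin d)) : Prop :=
  (∀ i, 1 ≤ y i * netNB v w (x i)) ∧
  ∃ (lam : Fin m → ℝ) (s : Fin m → Fin n → ℝ),
    (∀ i, 0 ≤ lam i) ∧
    (∀ i j, s i j ∈ Set.Icc (0 : ℝ) 1) ∧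
    (∀ i j, 0 < (inner ℝ (w j) (x i) : ℝ) → s i j = 1) ∧
    (∀ i j, (inner ℝ (w j) (x i) : ℝ) < 0 → s i j = 0) ∧
    (∀ j, w j = ∑ i, (lam i * y i * v j * s i j) • x i) ∧
    (∀ j, v j = ∑ i, lam i * y i * relu (inner ℝ (w j) (x i) : ℝ)) ∧
    (∀ i, lam i * (y i * netNB v w (x i) - 1) = 0)

/-- Uniform probability measure on the unit sphere S^{d-1} ⊂ ℝ^d. -/
noncomputable def unifSphere (d : ℕ) : Measure (EuclideanSpace ℝ (Fin d)) :=
  (μH[(d : ℝ) - 1] (Metric.sphere (0 : EuclideanSpace ℝ (Fin d)) 1))⁻¹ •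
    (μH[(d : ℝ) - 1]).restrict (Metric.sphere 0 1)

/-!
Put one neuron on each label class: for a class of `k` points with sum `u`, take
`w = k^(-1/4) • u` and `v = ±k^(1/4)`. By orthonormality each `x i` activates only the neuron
of its own class, with margin exactly `1`, and the stationarity conditions hold with
multipliers `λ i = k^(-1/2)`. The network is nonpositive on the half-space `⟪w₊, z⟫ ≤ 0`, and
by the symmetry `z ↦ -z` every such half-space carries at least half of the
`(d-1)`-dimensional Hausdorff measure of the sphere, which is positive and finite: the sphere
projects onto a `(d-1)`-ball, and it is covered by finitely many caps, each a Lipschitz image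
of a ball in a tangent plane.
-/

open Metric Finset Module
open scoped ENNReal

lemma relu_nonneg (z : ℝ) : 0 ≤ relu z := le_max_right z 0

lemma relu_of_nonneg {z : ℝ} (hz : 0 ≤ z) : relu z = z := max_eq_left hz

lemma relu_of_nonpos {z : ℝ} (hz : z ≤ 0) : relu z = 0 := max_eq_right hz

lemma netNB_nonpos {d n : ℕ} {v : Fin n → ℝ} {w : Fin n → EuclideanSpace ℝ (Fin d)}
    {z : EuclideanSpace ℝ (Fin d)} (h : ∀ j, v j ≤ 0 ∨ inner ℝ (w j) z ≤ 0) :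
    netNB v w z ≤ 0 := by
  refine Finset.sum_nonpos fun j _ => ?_
  rcases h j with hv | hw
  · exact mul_nonpos_of_nonpos_of_nonneg hv (relu_nonneg _)
  · rw [relu_of_nonpos hw, mul_zero]

section ClassNetwork

variable {E : Type*} [NormedAddCommGroup E] [InnerProductSpace ℝ E] {m n : ℕ}
  (x : Fin m → E) (σ : Fin n → ℝ) (cls : Fin m → Fin n)

def classCard (j : Fin n) : ℕ := #{i | cls i = j}

-- For an empty class this is `0 ^ (-1/4) = 0`, and the class neuron vanishes (`0⁻¹ = 0`).
noncomputable def classScale (j : Fin n) : ℝ := (classCard cls j : ℝ) ^ (-(1 / 4 : ℝ))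

noncomputable def classMultiplier (i : Fin m) : ℝ := classScale cls (cls i) ^ 2

noncomputable def classSum (j : Fin n) : E := ∑ i with cls i = j, x i

noncomputable def classOuterWeight (j : Fin n) : ℝ := σ j * (classScale cls j)⁻¹

noncomputable def classInnerWeight (j : Fin n) : E := classScale cls j • classSum x cls j

lemma classScale_nonneg (j : Fin n) : 0 ≤ classScale cls j :=
  Real.rpow_nonneg (Nat.cast_nonneg _) _

lemma classScale_ne_zero (i : Fin m) : classScale cls (cls i) ≠ 0 := by
  refine (Real.rpow_pos_of_pos ?_ _).ne'
  exact Nat.cast_pos.2 (Finset.card_pos.2 ⟨i, by simp⟩)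

lemma classCard_mul_classScale_pow_three (j : Fin n) :
    (classCard cls j : ℝ) * classScale cls j ^ 3 = (classScale cls j)⁻¹ := by
  rcases Nat.eq_zero_or_pos (classCard cls j) with hk | hk
  · simp [classScale, hk]
  · have hc : classScale cls j ^ 4 = (classCard cls j : ℝ)⁻¹ := by
      rw [classScale, ← Real.rpow_natCast, ← Real.rpow_mul (Nat.cast_nonneg _)]
      norm_num [Real.rpow_neg_one]
    have hk' : (0 : ℝ) < classCard cls j := Nat.cast_pos.2 hk
    have hc0 : classScale cls j ≠ 0 := (Real.rpow_pos_of_pos hk' _).ne'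
    calc (classCard cls j : ℝ) * classScale cls j ^ 3
        = (classCard cls j * classScale cls j ^ 4) * (classScale cls j)⁻¹ := by field_simp
      _ = (classScale cls j)⁻¹ := by rw [hc, mul_inv_cancel₀ hk'.ne', one_mul]

variable {x}

lemma inner_classSum (hx : Orthonormal ℝ x) (j : Fin n) (i : Fin m) :
    inner ℝ (classSum x cls j) (x i) = if cls i = j then 1 else 0 := by
  simp [classSum, sum_inner, orthonormal_iff_ite.mp hx, Finset.sum_ite_eq']

lemma inner_classInnerWeight (hx : Orthonormal ℝ x) (j : Fin n) (i : Fin m) :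
    inner ℝ (classInnerWeight x cls j) (x i) = if cls i = j then classScale cls j else 0 := by
  rw [classInnerWeight, real_inner_smul_left, inner_classSum cls hx, mul_ite, mul_one, mul_zero]

lemma relu_inner_classInnerWeight (hx : Orthonormal ℝ x) (j : Fin n) (i : Fin m) :
    relu (inner ℝ (classInnerWeight x cls j) (x i)) =
      inner ℝ (classInnerWeight x cls j) (x i) := by
  rw [inner_classInnerWeight cls hx]
  exact relu_of_nonneg (by split_ifs <;> simp [classScale_nonneg])

lemma classInnerWeight_eq_sum (hσ : ∀ j, σ j ^ 2 = 1) (j : Fin n) :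
    classInnerWeight x cls j = ∑ i, (classMultiplier cls i * σ (cls i) *
      classOuterWeight σ cls j * if cls i = j then 1 else 0) • x i := by
  rw [classInnerWeight, classSum, Finset.smul_sum, Finset.sum_filter]
  refine Finset.sum_congr rfl fun i _ => ?_
  split_ifs with hij
  · subst hij
    have hc := classScale_ne_zero cls i
    rw [classMultiplier, classOuterWeight, mul_one]
    congr 1
    calc classScale cls (cls i)
        = σ (cls i) ^ 2 * (classScale cls (cls i) ^ 2 * (classScale cls (cls i))⁻¹) := by
          rw [hσ, one_mul, sq, mul_inv_cancel_right₀ hc]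
      _ = _ := by ring
  · rw [mul_zero, zero_smul]

lemma classOuterWeight_eq_sum (hx : Orthonormal ℝ x) (j : Fin n) :
    classOuterWeight σ cls j =
      ∑ i, classMultiplier cls i * σ (cls i) *
        relu (inner ℝ (classInnerWeight x cls j) (x i)) := by
  have hterm : ∀ i, classMultiplier cls i * σ (cls i) *
      relu (inner ℝ (classInnerWeight x cls j) (x i)) =
      if cls i = j then σ j * classScale cls j ^ 3 else 0 := by
    intro i
    rw [relu_inner_classInnerWeight cls hx, inner_classInnerWeight cls hx, classMultiplier]
    split_ifs with hij
    · subst hij; ring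
    · rw [mul_zero]
  rw [Finset.sum_congr rfl fun i _ => hterm i, ← Finset.sum_filter, Finset.sum_const,
    nsmul_eq_mul, ← classCard, classOuterWeight, ← classCard_mul_classScale_pow_three]
  ring

end ClassNetwork

section ClassNetworkKKT

variable {d m n : ℕ} {x : Fin m → EuclideanSpace ℝ (Fin d)} (σ : Fin n → ℝ)
  (cls : Fin m → Fin n)

lemma netNB_class_apply (hx : Orthonormal ℝ x) (i : Fin m) :
    netNB (classOuterWeight σ cls) (classInnerWeight x cls) (x i) = σ (cls i) := by
  rw [netNB, Finset.sum_eq_single (cls i)]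
  · rw [relu_inner_classInnerWeight cls hx, inner_classInnerWeight cls hx, if_pos rfl,
      classOuterWeight, mul_assoc, inv_mul_cancel₀ (classScale_ne_zero cls i), mul_one]
  · intro j _ hj
    rw [relu_inner_classInnerWeight cls hx, inner_classInnerWeight cls hx, if_neg (Ne.symm hj),
      mul_zero]
  · simp

theorem isKKTNB_class (hx : Orthonormal ℝ x) (hσ : ∀ j, σ j ^ 2 = 1) :
    IsKKTNB x (σ ∘ cls) (classOuterWeight σ cls) (classInnerWeight x cls) := by
  have hmargin : ∀ i,
      (σ ∘ cls) i * netNB (classOuterWeight σ cls) (classInnerWeight x cls) (x i) = 1 :=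
    fun i => by rw [Function.comp_apply, netNB_class_apply σ cls hx, ← sq, hσ]
  refine ⟨fun i => (hmargin i).ge, classMultiplier cls, fun i j => if cls i = j then 1 else 0,
    fun i => sq_nonneg _, fun i j => ?_, fun i j h => ?_, fun i j h => ?_,
    classInnerWeight_eq_sum σ cls hσ, classOuterWeight_eq_sum σ cls hx,
    fun i => by rw [hmargin, sub_self, mul_zero]⟩
  · dsimp only
    split_ifs <;> simp
  · rw [inner_classInnerWeight cls hx] at h
    dsimp only
    split_ifs at h ⊢
    · rfl
    · exact absurd h (lt_irrefl 0)
  · rw [inner_classInnerWeight cls hx] at h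
    split_ifs at h
    · exact absurd h (classScale_nonneg cls j).not_gt
    · exact absurd h (lt_irrefl 0)

end ClassNetworkKKT

section Sphere

lemma lipschitzOnWith_normalize {V : Type*} [NormedAddCommGroup V] [NormedSpace ℝ V] :
    LipschitzOnWith 2 (NormedSpace.normalize : V → V) {x | 1 ≤ ‖x‖} := by
  refine LipschitzOnWith.of_dist_le_mul fun x (hx : 1 ≤ ‖x‖) y (hy : 1 ≤ ‖y‖) => ?_
  have hx0 : 0 < ‖x‖ := one_pos.trans_le hx
  have hy0 : 0 < ‖y‖ := one_pos.trans_le hy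
  have hsplit : NormedSpace.normalize x - NormedSpace.normalize y =
      ‖x‖⁻¹ • ((x - y) + (‖y‖ - ‖x‖) • NormedSpace.normalize y) := by
    simp only [NormedSpace.normalize, smul_add, smul_sub, smul_smul]
    have hcoef : ‖x‖⁻¹ * ((‖y‖ - ‖x‖) * ‖y‖⁻¹) = ‖x‖⁻¹ - ‖y‖⁻¹ := by
      field_simp
    rw [hcoef, sub_smul]
    abel
  calc dist (NormedSpace.normalize x) (NormedSpace.normalize y)
      = ‖x‖⁻¹ * ‖(x - y) + (‖y‖ - ‖x‖) • NormedSpace.normalize y‖ := by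
        rw [dist_eq_norm, hsplit, norm_smul, norm_inv, norm_norm]
    _ ≤ 1 * (‖x - y‖ + ‖x - y‖) := by
        gcongr
        · exact inv_le_one_of_one_le₀ hx
        · refine (norm_add_le _ _).trans (add_le_add le_rfl ?_)
          rw [norm_smul, NormedSpace.norm_normalize (norm_pos_iff.1 hy0), mul_one,
            Real.norm_eq_abs, norm_sub_rev x y]
          exact abs_norm_sub_norm_le y x
    _ = 2 * dist x y := by rw [dist_eq_norm]; ring

variable {E : Type*} [NormedAddCommGroup E] [InnerProductSpace ℝ E] [MeasurableSpace E]
  [BorelSpace E]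

lemma hausdorffMeasure_le_two_mul_inter_halfspace {s : Set E} (hs : ∀ z ∈ s, -z ∈ s) (u : E)
    (r : ℝ) : μH[r] s ≤ 2 * μH[r] (s ∩ {z | inner ℝ u z ≤ 0}) := by
  set H := s ∩ {z | inner ℝ u z ≤ 0}
  have hcover : s ⊆ H ∪ IsometryEquiv.neg E ⁻¹' H := by
    intro z hz
    rcases le_total (inner ℝ u z) 0 with h | h
    · exact Or.inl ⟨hz, h⟩
    · exact Or.inr ⟨hs z hz, by simpa [inner_neg_right] using h⟩
  calc μH[r] s ≤ μH[r] H + μH[r] (IsometryEquiv.neg E ⁻¹' H) :=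
        (measure_mono hcover).trans (measure_union_le _ _)
    _ = 2 * μH[r] H := by rw [(IsometryEquiv.neg E).hausdorffMeasure_preimage, two_mul]

variable [FiniteDimensional ℝ E]

lemma hausdorffMeasure_sphere_pos {e : ℕ} (he : finrank ℝ E = e + 1) :
    0 < μH[e] (sphere (0 : E) 1) := by
  have : Fact (finrank ℝ E = e + 1) := ⟨he⟩
  have : Nontrivial E := Module.nontrivial_of_finrank_eq_succ he
  obtain ⟨u, hu⟩ := exists_norm_eq E zero_le_one
  set K := (ℝ ∙ u)ᗮ
  have hK : finrank ℝ K = e :=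
    Submodule.finrank_orthogonal_span_singleton (norm_ne_zero_iff.1 (by simp [hu]))
  have hball : ball (0 : K) 1 ⊆ K.orthogonalProjectionOnto '' sphere 0 1 := by
    intro k hk
    set a := √(1 - ‖(k : E)‖ ^ 2)
    have hk1 : ‖(k : E)‖ < 1 := mem_ball_zero_iff.1 hk
    have hku : inner ℝ (k : E) (a • u) = 0 := by
      rw [real_inner_smul_right, Submodule.mem_orthogonal_singleton_iff_inner_left.1 k.2, mul_zero]
    refine ⟨k + a • u, ?_, ?_⟩
    · have hsq := norm_add_sq_eq_norm_sq_add_norm_sq_real hku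
      rw [norm_smul, hu, mul_one, Real.norm_of_nonneg (Real.sqrt_nonneg _),
        Real.mul_self_sqrt (by nlinarith [norm_nonneg (k : E)])] at hsq
      rw [mem_sphere_zero_iff_norm]
      nlinarith [norm_nonneg ((k : E) + a • u)]
    · have hu0 : K.orthogonalProjectionOnto u = 0 :=
        Submodule.orthogonalProjectionOnto_orthogonalComplement_singleton_eq_zero u
      rw [map_add, map_smul, Submodule.orthogonalProjectionOnto_mem_subspace_eq_self, hu0,
        smul_zero, add_zero]
  have hpos : 0 < μH[finrank ℝ K] (ball (0 : K) 1) := measure_ball_pos _ _ one_pos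
  rw [hK] at hpos
  exact hpos.trans_le ((measure_mono hball).trans
    (hausdorffMeasure_orthogonalProjectionOnto_le K _ _ (Nat.cast_nonneg e)))

lemma hausdorffMeasure_sphere_lt_top {e : ℕ} (he : finrank ℝ E = e + 1) :
    μH[e] (sphere (0 : E) 1) < ∞ := by
  have : Fact (finrank ℝ E = e + 1) := ⟨he⟩
  refine (isCompact_sphere 0 1).measure_lt_top_of_nhdsWithin fun z hz => ?_
  rw [mem_sphere_zero_iff_norm] at hz
  set K := (ℝ ∙ z)ᗮ
  have hK : finrank ℝ K = e :=
    Submodule.finrank_orthogonal_span_singleton (norm_ne_zero_iff.1 (by simp [hz]))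
  have hshift : LipschitzWith 1 fun k : K => z + k :=
    ((IsometryEquiv.addLeft z).isometry.comp isometry_subtype_coe).lipschitz
  have hmaps : Set.MapsTo (fun k : K => z + k) Set.univ {x | 1 ≤ ‖x‖} := by
    intro k _
    have hsq := norm_add_sq_eq_norm_sq_add_norm_sq_real
      (Submodule.mem_orthogonal_singleton_iff_inner_right.1 k.2)
    rw [hz] at hsq
    show 1 ≤ ‖z + k‖
    nlinarith [norm_nonneg (z + k), norm_nonneg (k : E)]
  have hf := lipschitzOnWith_normalize.comp hshift.lipschitzOnWith hmaps
  -- the cap around `z` is the radial projection of a ball in the tangent plane `z + (ℝ ∙ z)ᗮ`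
  have hcap : sphere 0 1 ∩ {w | 1 / 2 < inner ℝ z w} ⊆
      (fun k : K => NormedSpace.normalize (z + k)) '' closedBall 0 3 := by
    rintro w ⟨hw, ht : 1 / 2 < inner ℝ z w⟩
    rw [mem_sphere_zero_iff_norm] at hw
    have ht0 : 0 < inner ℝ z w := by linarith
    have hmem : (inner ℝ z w)⁻¹ • w - z ∈ K := by
      rw [Submodule.mem_orthogonal_singleton_iff_inner_right, inner_sub_right,
        real_inner_smul_right, inv_mul_cancel₀ ht0.ne', real_inner_self_eq_norm_sq, hz]
      norm_num
    refine ⟨⟨_, hmem⟩, ?_, ?_⟩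
    · rw [mem_closedBall_zero_iff, Submodule.coe_norm]
      refine (norm_sub_le _ _).trans ?_
      rw [norm_smul, hw, hz, mul_one, Real.norm_of_nonneg (inv_nonneg.2 ht0.le)]
      have : (inner ℝ z w)⁻¹ < 2 := by
        rw [inv_lt_comm₀ ht0 two_pos]
        linarith
      linarith
    · simp only [add_sub_cancel, NormedSpace.normalize_smul_of_pos (inv_pos.2 ht0),
        NormedSpace.normalize_eq_self_of_norm_eq_one hw]
  refine ⟨_, inter_mem_nhdsWithin _ ((isOpen_lt continuous_const
    (continuous_const.inner continuous_id)).mem_nhds ?_), (measure_mono hcap).trans_lt ?_⟩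
  · show 1 / 2 < inner ℝ z z
    rw [real_inner_self_eq_norm_sq, hz]
    norm_num
  · refine ((hf.mono (Set.subset_univ _)).hausdorffMeasure_image_le (Nat.cast_nonneg e)).trans_lt
      (ENNReal.mul_lt_top (by simp) ?_)
    rw [← hK]
    exact measure_closedBall_lt_top

end Sphere

lemma half_le_unifSphere_toReal {d : ℕ} (hd : d ≠ 0) (u : EuclideanSpace ℝ (Fin d))
    {t : Set (EuclideanSpace ℝ (Fin d))} (ht : {z | inner ℝ u z ≤ 0} ⊆ t) :
    1 / 2 ≤ (unifSphere d t).toReal := by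
  obtain ⟨e, rfl⟩ := Nat.exists_eq_add_one_of_ne_zero hd
  have hdim : finrank ℝ (EuclideanSpace ℝ (Fin (e + 1))) = e + 1 := finrank_euclideanSpace_fin
  have hexp : ((e + 1 : ℕ) : ℝ) - 1 = e := by push_cast; ring
  set S := sphere (0 : EuclideanSpace ℝ (Fin (e + 1))) 1
  have hS0 := hausdorffMeasure_sphere_pos hdim
  have hStop := hausdorffMeasure_sphere_lt_top hdim
  have hhalf : μH[e] S ≤ 2 * μH[e] (t ∩ S) :=
    (hausdorffMeasure_le_two_mul_inter_halfspace (fun z hz => by simpa [S] using hz) u e).trans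
      (by gcongr 2 * ?_; exact measure_mono fun z hz => ⟨ht hz.2, hz.1⟩)
  have htS : μH[e] (t ∩ S) ≠ ∞ := ((measure_mono Set.inter_subset_right).trans_lt hStop).ne
  have hb : 0 < (μH[e] S).toReal := ENNReal.toReal_pos hS0.ne' hStop.ne
  have hhalf' : (μH[e] S).toReal ≤ 2 * (μH[e] (t ∩ S)).toReal := by
    simpa using ENNReal.toReal_mono (ENNReal.mul_ne_top (by simp) htS) hhalf
  rw [unifSphere, hexp, Measure.smul_apply, smul_eq_mul,
    Measure.restrict_apply' isClosed_sphere.measurableSet, ENNReal.toReal_mul, ENNReal.toReal_inv,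
    inv_mul_eq_div, le_div_iff₀ hb]
  linarith

/-- Benign overfitting does not follow from KKT without bias (Proposition 4.6). -/
theorem stmt6 {d m : ℕ}
    (x : Fin m → EuclideanSpace ℝ (Fin d)) (y : Fin m → ℝ)
    (hx : ∀ i, ‖x i‖ = 1)
    (horth : ∀ i j, i ≠ j → (inner ℝ (x i) (x j) : ℝ) = 0)
    (hy : ∀ i, y i = 1 ∨ y i = -1) :
    ∃ (n : ℕ) (v : Fin n → ℝ) (w : Fin n → EuclideanSpace ℝ (Fin d)),
      IsKKTNB x y v w ∧
      1 / 2 - 1 / 2 ^ (({i | y i = -1} : Set (Fin m)).ncard) ≤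
        (unifSphere d {z | netNB v w z ≤ 0}).toReal := by
  have hxo : Orthonormal ℝ x := orthonormal_iff_ite.2 fun i j => by
    split_ifs with hij
    · rw [hij, real_inner_self_eq_norm_sq, hx, one_pow]
    · exact horth i j hij
  let cls : Fin m → Fin 2 := fun i => if y i = 1 then 0 else 1
  have hy_cls : y = ![1, -1] ∘ cls := by
    funext i
    rcases hy i with h | h <;> norm_num [cls, h]
  refine ⟨2, classOuterWeight ![1, -1] cls, classInnerWeight x cls, ?_, ?_⟩
  · rw [hy_cls]
    exact isKKTNB_class _ cls hxo (by simp [Fin.forall_fin_two])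
  · rcases isEmpty_or_nonempty (Fin m) with hm | ⟨⟨i⟩⟩
    · refine le_trans ?_ ENNReal.toReal_nonneg
      norm_num [Set.eq_empty_of_isEmpty]
    · have hd : d ≠ 0 := by
        rintro rfl
        simpa [Subsingleton.elim (x i) 0] using hx i
      refine (sub_le_self _ (by positivity)).trans <| half_le_unifSphere_toReal hd
        (classInnerWeight x cls 0) fun z hz => netNB_nonpos fun j => ?_
      fin_cases j
      · exact Or.inr hz
      · exact Or.inl (by simp [classOuterWeight, classScale_nonneg])
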